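/- arXiv:1912.02869 — 2 statements merged into one kernel-verified Lean document; each statement's English description precedes it below -/
import Mathlib

section
/- Let k > 0 and let v0 satisfy 1 < v0 < u(k) - k. Set r = R(v0), A = -(v0 + k)·exp(-v0 + k·r/v0), and let w ≥ -1 be a real number satisfying w·exp(w) = A. Then the pair x = v0 + r, y = w - (v0 + k)·r/v0 is the unique solution with x, y > 0 of the system of equations v0 = x/(1 - exp(-x)) and v0 + k = y·exp(x)/(1 - exp(-y)). -/
/-!
Write `ψ t = t / (1 - e⁻ᵗ)`, strictly increasing on `t > 0`, so each equation of the system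
determines its unknown. The key identity is that `a eᵃ = b eᵇ` with `a ≠ b` gives
`e^(b - a) = a / b` and hence `ψ (a - b) = -b`. With `(a, b) = (r, -v0)` this solves the first
equation by `x = v0 + r`. Putting `c = (v0 + k) r / v0`, the equation defining `w` becomes
`w eʷ = c eᶜ`, so `(a, b) = (w, c)` gives `ψ (w - c) = -c = (v0 + k) e^(-x)`, which is the second
equation. It remains to see that `w ≠ c`, i.e. `c < -1`, i.e. `r < -v0 / (v0 + k)`: since `t eᵗ` is
increasing on `[-1, ∞)`, this reduces to `v0 (s - 1) < s log s` for `s = v0 + k`, and that is the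
Region-3 condition `s < u(k)`, because `s ↦ s - s log s / (s - 1)` is increasing and equals `k`
at `s = u(k)`.
-/

open Real Set

lemma neg_exp_neg_one_lt_mul_exp {t : ℝ} (ht : t ≠ -1) : -exp (-1) < t * exp t := by
  have key : -t * exp t < exp (-1) :=
    calc -t * exp t = (-1 - t + 1) * exp t := by ring
      _ < exp (-1 - t) * exp t := by
        gcongr; exact add_one_lt_exp (by contrapose! ht; linarith)
      _ = exp (-1) := by rw [← exp_add]; ring_nf
  linarith

lemma strictMonoOn_mul_exp : StrictMonoOn (fun t : ℝ => t * exp t) (Ici (-1)) := by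
  refine strictMonoOn_of_deriv_pos (convex_Ici _) (by fun_prop) fun t ht => ?_
  rw [interior_Ici, mem_Ioi] at ht
  have hd : HasDerivAt (fun t : ℝ => t * exp t) (1 * exp t + t * exp t) t :=
    (hasDerivAt_id t).mul (hasDerivAt_exp t)
  rw [hd.deriv]
  nlinarith [exp_pos t]

lemma strictMonoOn_div_one_sub_exp_neg :
    StrictMonoOn (fun t : ℝ => t / (1 - exp (-t))) (Ioi 0) := by
  have hden : ∀ t : ℝ, 0 < t → 0 < 1 - exp (-t) := fun t ht => by
    simpa using exp_lt_one_iff.2 (neg_neg_of_pos ht)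
  refine strictMonoOn_of_deriv_pos (convex_Ioi 0)
    (continuousOn_id.div (by fun_prop) fun t ht => (hden t ht).ne') fun t ht => ?_
  rw [interior_Ioi, mem_Ioi] at ht
  have hd : HasDerivAt (fun t : ℝ => 1 - exp (-t)) (exp (-t)) t := by
    simpa using ((hasDerivAt_neg t).exp).const_sub 1
  have hd' : HasDerivAt (fun t : ℝ => t / (1 - exp (-t)))
      ((1 * (1 - exp (-t)) - t * exp (-t)) / (1 - exp (-t)) ^ 2) t :=
    (hasDerivAt_id t).div hd (hden t ht).ne'
  rw [hd'.deriv]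
  have hnum : (1 + t) * exp (-t) < 1 := by
    calc (1 + t) * exp (-t) < exp t * exp (-t) := by
          gcongr; linarith [add_one_lt_exp ht.ne']
      _ = 1 := by rw [← exp_add]; simp
  have := hden t ht
  apply div_pos <;> nlinarith

lemma strictMonoOn_sub_mul_log_div_sub_one :
    StrictMonoOn (fun s : ℝ => s - s * log s / (s - 1)) (Ioi 1) := by
  refine strictMonoOn_of_deriv_pos (convex_Ioi 1) ?_ fun s hs => ?_
  · refine continuousOn_id.sub (ContinuousOn.div ?_ (by fun_prop) fun s hs => ?_)
    · exact continuousOn_id.mul (continuousOn_log.mono fun s hs => by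
        simp only [mem_Ioi, mem_compl_iff, mem_singleton_iff] at hs ⊢; linarith)
    · exact sub_ne_zero.2 (ne_of_gt hs)
  rw [interior_Ioi, mem_Ioi] at hs
  have hs0 : 0 < s := by linarith
  have hd : HasDerivAt (fun s : ℝ => s - s * log s / (s - 1))
      (1 - ((1 * log s + s * s⁻¹) * (s - 1) - s * log s * 1) / (s - 1) ^ 2) s :=
    (hasDerivAt_id s).sub
      (((hasDerivAt_id s).mul (hasDerivAt_log hs0.ne')).div
        ((hasDerivAt_id s).sub_const 1) (sub_ne_zero.2 hs.ne'))
  rw [hd.deriv, mul_inv_cancel₀ hs0.ne', sub_pos, div_lt_one (by nlinarith)]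
  have hlog : s - 1 < s * log s := by
    have h := log_lt_sub_one_of_pos (inv_pos.2 hs0) (inv_ne_one.2 hs.ne')
    rw [log_inv] at h
    have : s * (1 - s⁻¹) = s - 1 := by field_simp
    nlinarith
  nlinarith [mul_pos (sub_pos.2 hs) (sub_pos.2 hs)]

lemma exp_sub_eq_div_of_mul_exp_eq {a b : ℝ} (hb : b ≠ 0) (h : a * exp a = b * exp b) :
    exp (b - a) = a / b := by
  rw [eq_div_iff hb, exp_sub, div_mul_eq_mul_div, div_eq_iff (exp_pos a).ne', h, mul_comm]

lemma div_one_sub_exp_neg_of_mul_exp_eq {a b : ℝ} (hb : b ≠ 0) (hab : a ≠ b)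
    (h : a * exp a = b * exp b) : (a - b) / (1 - exp (-(a - b))) = -b := by
  rw [neg_sub, exp_sub_eq_div_of_mul_exp_eq hb h, div_eq_iff]
  · field_simp; ring
  · rw [one_sub_div hb]; exact div_ne_zero (sub_ne_zero.2 hab.symm) hb

lemma lt_mul_log_div_sub_one_of_lt {k u s : ℝ} (hu : 1 < u)
    (huk : k = u - log u / (1 - 1 / u)) (hs : 1 < s) (hsu : s < u) :
    s - k < s * log s / (s - 1) := by
  have hmono := strictMonoOn_sub_mul_log_div_sub_one hs hu hsu
  have hu' : log u / (1 - 1 / u) = u * log u / (u - 1) := by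
    field_simp [sub_ne_zero.2 hu.ne']
  simp only at hmono
  linarith

lemma lt_neg_div_of_mul_exp_eq {v s r : ℝ} (hv : 0 < v) (hvs : v ≤ s)
    (hlog : v * (s - 1) < s * log s) (hr : -1 ≤ r) (hre : r * exp r = -v * exp (-v)) :
    r < -(v / s) := by
  have hs : 0 < s := hv.trans_le hvs
  have hexp : exp (v - v / s) < s := by
    have h : v * (s - 1) = s * (v - v / s) := by field_simp
    rw [h] at hlog
    simpa [exp_log hs] using exp_lt_exp.2 (lt_of_mul_lt_mul_left hlog hs.le)
  have hlt : r * exp r < -(v / s) * exp (-(v / s)) := by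
    calc r * exp r = -(v / s) * (s * exp (-v)) := by rw [hre]; field_simp
      _ < -(v / s) * (exp (v - v / s) * exp (-v)) := by
        rw [neg_mul, neg_mul, neg_lt_neg_iff]; gcongr
      _ = -(v / s) * exp (-(v / s)) := by rw [← exp_add]; ring_nf
  exact (strictMonoOn_mul_exp.lt_iff_lt hr
    (by rw [mem_Ici, neg_le_neg_iff, div_le_one hs]; exact hvs)).1 hlt

lemma add_mul_div_lt_neg_one {k u v r : ℝ} (hk : 0 < k) (hu : 1 < u)
    (huk : k = u - log u / (1 - 1 / u)) (hv : 1 < v) (hvu : v < u - k) (hr : -1 ≤ r)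
    (hre : r * exp r = -v * exp (-v)) : (v + k) * r / v < -1 := by
  have hs : 0 < v + k := by linarith
  have hlog := lt_mul_log_div_sub_one_of_lt hu huk (by linarith) (by linarith : v + k < u)
  rw [add_sub_cancel_right, lt_div_iff₀ (by linarith)] at hlog
  have hr' := lt_neg_div_of_mul_exp_eq (by linarith) (by linarith) hlog hr hre
  rw [lt_neg, div_lt_iff₀ hs] at hr'
  rw [div_lt_iff₀ (by linarith)]
  linarith

lemma neg_mul_exp_eq_mul_exp {v k r : ℝ} (hv : v ≠ 0) (hre : r * exp r = -v * exp (-v)) :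
    -(v + k) * exp (-v + k * r / v) = (v + k) * r / v * exp ((v + k) * r / v) := by
  have hexp : exp (-v) = -(r * exp r) / v := by rw [hre]; field_simp
  calc -(v + k) * exp (-v + k * r / v)
      = (v + k) * r / v * (exp r * exp (k * r / v)) := by rw [exp_add, hexp]; field_simp
    _ = (v + k) * r / v * exp ((v + k) * r / v) := by rw [← exp_add]; congr 2; field_simp

/-- In Region 3 (`1 < v0 < u(k) - k`), with `r = R(v0)`, `A = -(v0+k)·exp(-v0 + k·r/v0)`
and `w = W(A)` (the solution `w ≥ -1` of `w·eʷ = A`), the pair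
`x = v0 + r`, `y = w - (v0+k)·r/v0` is the unique positive solution of the system
`v0 = x/(1 - exp(-x))` and `v0 + k = y·exp(x)/(1 - exp(-y))`. -/
theorem stmt3 (k u v0 r w : ℝ) (hk : 0 < k) (hu : 1 < u)
    (huk : k = u - Real.log u / (1 - 1 / u))
    (hv0 : 1 < v0) (hv0' : v0 < u - k)
    (hr1 : -1 ≤ r) (hr2 : r < 0) (hre : r * Real.exp r = -v0 * Real.exp (-v0))
    (hw1 : -1 ≤ w)
    (hwe : w * Real.exp w = -(v0 + k) * Real.exp (-v0 + k * r / v0)) :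
    0 < v0 + r ∧ 0 < w - (v0 + k) * r / v0 ∧
    v0 = (v0 + r) / (1 - Real.exp (-(v0 + r))) ∧
    v0 + k = (w - (v0 + k) * r / v0) * Real.exp (v0 + r) /
      (1 - Real.exp (-(w - (v0 + k) * r / v0))) ∧
    (∀ x y : ℝ, 0 < x → 0 < y →
      v0 = x / (1 - Real.exp (-x)) →
      v0 + k = y * Real.exp x / (1 - Real.exp (-y)) →
      x = v0 + r ∧ y = w - (v0 + k) * r / v0) := by
  have hv0ne : -v0 ≠ 0 := by linarith
  have hx0 : 0 < v0 + r := by linarith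
  have hψx0 : (v0 + r) / (1 - exp (-(v0 + r))) = v0 := by
    simpa [add_comm] using div_one_sub_exp_neg_of_mul_exp_eq hv0ne (by linarith) hre
  have hexpx0 : exp (v0 + r) = -v0 / r := by
    have h := exp_sub_eq_div_of_mul_exp_eq hv0ne hre
    rw [show -v0 - r = -(v0 + r) by ring, exp_neg] at h
    rw [← inv_inv (exp (v0 + r)), h, inv_div]
  have hc := add_mul_div_lt_neg_one hk hu huk hv0 hv0' hr1 hre
  have hwc := hwe.trans (neg_mul_exp_eq_mul_exp (by linarith) hre)
  set c := (v0 + k) * r / v0 with hc_def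
  have hw : -1 < w := hw1.lt_of_ne fun h =>
    (neg_exp_neg_one_lt_mul_exp hc.ne).ne (by rw [← hwc, ← h, neg_one_mul])
  have hy0 : 0 < w - c := by linarith
  have hψy0 : (w - c) / (1 - exp (-(w - c))) = -c :=
    div_one_sub_exp_neg_of_mul_exp_eq (by linarith) (by linarith) hwc
  have hsys2 : v0 + k = (w - c) / (1 - exp (-(w - c))) * exp (v0 + r) := by
    rw [hψy0, hexpx0, hc_def]; field_simp [hr2.ne]
  refine ⟨hx0, hy0, hψx0.symm, by rwa [mul_div_right_comm], fun x y hx hy h1 h2 => ?_⟩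
  obtain rfl : x = v0 + r :=
    strictMonoOn_div_one_sub_exp_neg.injOn hx hx0 (h1.symm.trans hψx0.symm)
  refine ⟨rfl, strictMonoOn_div_one_sub_exp_neg.injOn hy hy0 ?_⟩
  rw [mul_div_right_comm] at h2
  exact mul_right_cancel₀ (exp_pos _).ne' (h2.symm.trans hsys2)
end

section
/- Let k > 0, let u(k) be the unique real number u > 1 satisfying k = u - (ln u)/(1 - 1/u), for a > 0 let R(a) be the unique real r with -1 ≤ r < 0 satisfying r·exp(r) = -a·exp(-a), and define A(a) = -(a + k)·exp(-a + k·R(a)/a) for a > 1. Then: (1) A(u(k) - k) = -exp(-1), so the unique w ≥ -1 with w·exp(w) = A(u(k) - k) equals -1; and (2) A is strictly decreasing on the interval (1, u(k) - k). -/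
private lemma xexp_hasDeriv (x : ℝ) :
    HasDerivAt (fun x : ℝ => x * Real.exp x) ((1 + x) * Real.exp x) x := by
  have h := (hasDerivAt_id x).mul (Real.hasDerivAt_exp x)
  refine h.congr_deriv ?_
  simp [add_mul]

private lemma xexp_mono : StrictMonoOn (fun x : ℝ => x * Real.exp x) (Set.Ici (-1)) := by
  apply strictMonoOn_of_deriv_pos (convex_Ici _)
  · exact Continuous.continuousOn (by continuity)
  · intro x hx
    rw [interior_Ici] at hx
    rw [(xexp_hasDeriv x).deriv]
    have h1 : (0:ℝ) < 1 + x := by linarith [hx.out]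
    positivity

private lemma xexpneg_hasDeriv (x : ℝ) :
    HasDerivAt (fun x : ℝ => x * Real.exp (-x)) ((1 - x) * Real.exp (-x)) x := by
  have he : HasDerivAt (fun x : ℝ => Real.exp (-x)) (-Real.exp (-x)) x := by
    have := (Real.hasDerivAt_exp (-x)).comp x (hasDerivAt_neg x)
    exact this.congr_deriv (by simp)
  have h := (hasDerivAt_id x).mul he
  refine h.congr_deriv ?_
  simp [id]; ring

private lemma xexpneg_anti : StrictAntiOn (fun x : ℝ => x * Real.exp (-x)) (Set.Ici 1) := by
  apply strictAntiOn_of_deriv_neg (convex_Ici _)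
  · exact Continuous.continuousOn (by continuity)
  · intro x hx
    rw [interior_Ici] at hx
    rw [(xexpneg_hasDeriv x).deriv]
    have h1 : (1:ℝ) - x < 0 := by linarith [hx.out]
    have h2 : 0 < Real.exp (-x) := Real.exp_pos _
    nlinarith

private noncomputable def alp (t : ℝ) : ℝ := t * Real.log t / (t - 1)
private noncomputable def psii (t : ℝ) : ℝ := t ^ 2 * (t - 1 - Real.log t) / (t - 1) ^ 2

private lemma alp_hasDeriv {t : ℝ} (ht : 1 < t) :
    HasDerivAt alp ((t - 1 - Real.log t) / (t - 1) ^ 2) t := by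
  have ht0 : (0:ℝ) < t := by linarith
  have ht1 : t - 1 ≠ 0 := by intro h; linarith [sub_eq_zero.mp h]
  have h1 : HasDerivAt (fun t : ℝ => t * Real.log t) (Real.log t + 1) t := by
    have := (hasDerivAt_id t).mul (Real.hasDerivAt_log (ne_of_gt ht0))
    refine this.congr_deriv ?_
    field_simp; simp only [id]; ring
  have h2 : HasDerivAt (fun t : ℝ => t - 1) 1 t := (hasDerivAt_id t).sub_const 1
  have h := h1.div h2 ht1
  refine h.congr_deriv ?_
  field_simp
  ring

private lemma alp_mono : StrictMonoOn alp (Set.Ioi 1) := by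
  apply strictMonoOn_of_deriv_pos (convex_Ioi _)
  · exact fun t ht => (alp_hasDeriv ht).continuousAt.continuousWithinAt
  · intro t ht
    rw [interior_Ioi] at ht
    rw [(alp_hasDeriv ht).deriv]
    have h1 : Real.log t < t - 1 := Real.log_lt_sub_one_of_pos (by linarith [ht.out]) (by linarith [ht.out])
    have h2 : (0:ℝ) < (t-1)^2 := by
      have h3 : (0:ℝ) < t - 1 := by linarith [ht.out]
      positivity
    apply div_pos (by linarith) h2

private lemma alp_pos {t : ℝ} (ht : 1 < t) : 0 < alp t := by
  have h1 : 0 < Real.log t := Real.log_pos ht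
  have h2 : (0:ℝ) < t - 1 := by linarith
  have h3 : (0:ℝ) < t := by linarith
  unfold alp; positivity

private lemma sq_gt_two_h {t : ℝ} (ht : 1 < t) : 2 * (t - 1 - Real.log t) < (t - 1) ^ 2 := by
  have hq : StrictMonoOn (fun t : ℝ => Real.log t - (t-1) + (t-1)^2/2) (Set.Ici 1) := by
    apply strictMonoOn_of_deriv_pos (convex_Ici _)
    · apply ContinuousOn.add (ContinuousOn.sub ?_ (by fun_prop)) (by fun_prop)
      exact fun x hx => (Real.continuousAt_log (by intro h; simp [h] at hx; linarith)).continuousWithinAt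
    · intro x hx
      rw [interior_Ici] at hx
      have hx0 : (0:ℝ) < x := by linarith [hx.out]
      have hd : HasDerivAt (fun t : ℝ => Real.log t - (t-1) + (t-1)^2/2) (1/x - 1 + (x-1)) x := by
        have h1 := Real.hasDerivAt_log (ne_of_gt hx0)
        have h2 : HasDerivAt (fun t : ℝ => t - 1) 1 x := (hasDerivAt_id x).sub_const 1
        have h3 : HasDerivAt (fun t : ℝ => (t-1)^2/2) (x-1) x := by
          have := (h2.pow 2).div_const 2
          refine this.congr_deriv ?_; ring
        have := (h1.sub h2).add h3
        refine this.congr_deriv ?_; rw [one_div]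
      rw [hd.deriv]
      have : 1/x - 1 + (x - 1) = (x-1)^2/x := by field_simp; ring
      rw [this]
      have h1 : (0:ℝ) < x - 1 := by linarith [hx.out]
      positivity
  have := hq (Set.self_mem_Ici) (Set.mem_Ici.mpr (le_of_lt ht)) ht
  simp at this
  nlinarith [this]

private lemma psii_hasDeriv {t : ℝ} (ht : 1 < t) :
    HasDerivAt psii (t * ((t-1)^2 - 2*(t - 1 - Real.log t)) / (t-1)^3) t := by
  have ht0 : (0:ℝ) < t := by linarith
  have ht1 : t - 1 ≠ 0 := by intro h; linarith [sub_eq_zero.mp h]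
  have h1 : HasDerivAt (fun t : ℝ => t ^ 2 * (t - 1 - Real.log t))
      (2*t*(t - 1 - Real.log t) + (t^2 - t)) t := by
    have ha : HasDerivAt (fun t : ℝ => t ^ 2) (2*t) t := by
      have := hasDerivAt_pow 2 t; simpa using this
    have hb : HasDerivAt (fun t : ℝ => t - 1 - Real.log t) (1 - 1/t) t := by
      have := ((hasDerivAt_id t).sub_const 1).sub (Real.hasDerivAt_log (ne_of_gt ht0))
      refine this.congr_deriv ?_; rw [one_div]
    have := ha.mul hb
    refine this.congr_deriv ?_
    field_simp
  have h2 : HasDerivAt (fun t : ℝ => (t - 1) ^ 2) (2*(t-1)) t := by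
    have := ((hasDerivAt_id t).sub_const 1).pow 2
    refine this.congr_deriv ?_; simp
  have h := h1.div h2 (pow_ne_zero 2 ht1)
  refine h.congr_deriv ?_
  field_simp
  ring

private lemma psii_mono : StrictMonoOn psii (Set.Ioi 1) := by
  apply strictMonoOn_of_deriv_pos (convex_Ioi _)
  · exact fun t ht => (psii_hasDeriv ht).continuousAt.continuousWithinAt
  · intro t ht
    rw [interior_Ioi] at ht
    rw [(psii_hasDeriv ht).deriv]
    have h1 := sq_gt_two_h ht.out
    have h2 : (0:ℝ) < t - 1 := by linarith [ht.out]
    have h3 : (0:ℝ) < t := by linarith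
    apply div_pos (by nlinarith) (by positivity)

private lemma psii_pos {t : ℝ} (ht : 1 < t) : 0 < psii t := by
  have h1 : Real.log t < t - 1 := Real.log_lt_sub_one_of_pos (by linarith) (by linarith)
  have h2 : (0:ℝ) < t - 1 := by linarith
  have h3 : (0:ℝ) < t := by linarith
  unfold psii
  have h4 : (0:ℝ) < t - 1 - Real.log t := by linarith
  positivity

private lemma key_lemma (k a r : ℝ) (hk : 0 < k) (ha : 1 < a) (hr1 : -1 ≤ r) (hr0 : r < 0)
    (hre : r * Real.exp r = -a * Real.exp (-a)) :
    ∃ t, 1 < t ∧ alp t = a ∧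
      -(a + k) * Real.exp (-a + k * r / a) =
        -Real.exp (Real.log (a + k) - a - k / t) := by
  have ha0 : (0:ℝ) < a := by linarith
  have hrne : r ≠ -1 := by
    intro h
    have h2 : a * Real.exp (-a) < 1 * Real.exp (-(1:ℝ)) :=
      xexpneg_anti (Set.self_mem_Ici) (Set.mem_Ici.mpr (le_of_lt ha)) ha
    rw [h] at hre
    simp at hre h2
    nlinarith [hre, h2]
  have hrgt : -1 < r := lt_of_le_of_ne hr1 (Ne.symm hrne)
  set g := -r with hg
  have hg0 : 0 < g := by simp [hg]; linarith
  have hg1 : g < 1 := by simp [hg]; linarith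
  have hge : g * Real.exp (-g) = a * Real.exp (-a) := by
    have : -(g * Real.exp (-g)) = -(a * Real.exp (-a)) := by
      simpa [hg, neg_mul] using hre
    linarith [this]
  have hlog : Real.log g - g = Real.log a - a := by
    have h1 := congrArg Real.log hge
    rw [Real.log_mul (ne_of_gt hg0) (Real.exp_ne_zero _),
      Real.log_mul (ne_of_gt ha0) (Real.exp_ne_zero _),
      Real.log_exp, Real.log_exp] at h1
    linarith
  set t := a / g with htdef
  have ht1 : 1 < t := by
    rw [htdef, lt_div_iff₀ hg0]
    linarith
  have hta : a = t * g := by rw [htdef, div_mul_cancel₀ a (ne_of_gt hg0)]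
  have hlt : Real.log t = a - g := by
    rw [htdef, Real.log_div (ne_of_gt ha0) (ne_of_gt hg0)]
    linarith
  have htg : g * (t - 1) = Real.log t := by rw [hlt]; nlinarith [hta]
  have halp : alp t = a := by
    unfold alp
    have ht1' : t - 1 ≠ 0 := by intro h; nlinarith [sub_eq_zero.mp h]
    field_simp
    rw [← htg]
    nlinarith [hta]
  refine ⟨t, ht1, halp, ?_⟩
  have hexp : -a + k * r / a = -a - k / t := by
    rw [htdef, hg]
    field_simp; ring
  rw [hexp]
  have hak : (0:ℝ) < a + k := by linarith
  rw [show Real.log (a+k) - a - k/t = Real.log (a+k) + (-a - k/t) by ring]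
  rw [Real.exp_add, Real.exp_log hak]
  ring

private lemma F_hasDeriv (k : ℝ) {t : ℝ} (ht : 1 < t) (hpos : 0 < alp t + k) :
    HasDerivAt (fun t => Real.log (alp t + k) - alp t - k / t)
      ((t - 1 - Real.log t) / (t - 1) ^ 2 / (alp t + k)
        - (t - 1 - Real.log t) / (t - 1) ^ 2 + k / t ^ 2) t := by
  have ht0 : (0:ℝ) < t := by linarith
  have h1 := (alp_hasDeriv ht).add_const k
  have hlog := h1.log (ne_of_gt hpos)
  have hdivk : HasDerivAt (fun t : ℝ => k / t) (-(k / t ^ 2)) t := by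
    have := (hasDerivAt_const t k).div (hasDerivAt_id t) (ne_of_gt ht0)
    refine this.congr_deriv ?_
    field_simp; simp only [id, zero_mul, zero_sub]; rw [mul_div_assoc, div_self (by positivity), mul_one]
  have h := ((hlog.sub (alp_hasDeriv ht)).sub hdivk)
  refine h.congr_deriv ?_
  ring

/-- With `A(a) = -(a + k)·exp(-a + k·R(a)/a)`:
(1) `A(u(k) - k) = -e^{-1}`, so the unique `w ≥ -1` with `w·eʷ = A(u(k)-k)`
equals `-1`; and (2) `A` is strictly decreasing on `(1, u(k) - k)`. -/
theorem stmt18 (k u : ℝ) (R : ℝ → ℝ) (hk : 0 < k) (hu : 1 < u)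
    (huk : k = u - Real.log u / (1 - 1 / u))
    (hR : ∀ a : ℝ, 0 < a →
      -1 ≤ R a ∧ R a < 0 ∧ R a * Real.exp (R a) = -a * Real.exp (-a)) :
    (-((u - k) + k) * Real.exp (-(u - k) + k * R (u - k) / (u - k)) =
      -Real.exp (-1)) ∧
    (∀ w : ℝ, -1 ≤ w →
      w * Real.exp w =
        -((u - k) + k) * Real.exp (-(u - k) + k * R (u - k) / (u - k)) →
      w = -1) ∧
    StrictAntiOn (fun a : ℝ => -(a + k) * Real.exp (-a + k * R a / a))
      (Set.Ioo 1 (u - k)) := by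
  have hu0 : (0:ℝ) < u := by linarith
  have hu1 : (0:ℝ) < u - 1 := by linarith
  have hune : u ≠ 0 := ne_of_gt hu0
  have hu1ne : u - 1 ≠ 0 := ne_of_gt hu1
  have hlu : 0 < Real.log u := Real.log_pos hu
  have hlune : Real.log u ≠ 0 := ne_of_gt hlu
  have hlu' : Real.log u < u - 1 := Real.log_lt_sub_one_of_pos hu0 (ne_of_gt hu)
  have hgap : (0:ℝ) < u - 1 - Real.log u := by linarith
  have hgapne : u - 1 - Real.log u ≠ 0 := ne_of_gt hgap
  have hainv : u - k = u * Real.log u / (u - 1) := by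
    rw [huk]
    field_simp
    ring
  have ha0 : 0 < u - k := by rw [hainv]; positivity
  set r0 : ℝ := -(Real.log u / (u - 1)) with hr0def
  have hr0mem : -1 ≤ r0 := by
    rw [hr0def, neg_le, neg_neg]
    rw [div_le_one hu1]
    linarith
  have hr0neg : r0 < 0 := by
    rw [hr0def, neg_lt, neg_zero]
    positivity
  have hr0e : r0 * Real.exp r0 = -(u - k) * Real.exp (-(u - k)) := by
    have h1 : -(u - k) = u * r0 := by
      rw [hainv, hr0def]; field_simp
    have h2 : Real.log u + u * r0 = r0 := by
      rw [hr0def]; field_simp; ring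
    calc r0 * Real.exp r0 = r0 * Real.exp (Real.log u + u * r0) := by rw [h2]
      _ = r0 * (u * Real.exp (u * r0)) := by rw [Real.exp_add, Real.exp_log hu0]
      _ = (u * r0) * Real.exp (u * r0) := by ring
      _ = -(u - k) * Real.exp (-(u - k)) := by rw [← h1]
  obtain ⟨hRm, hRn, hRe⟩ := hR (u - k) ha0
  have hReq : R (u - k) = r0 := by
    apply xexp_mono.injOn (Set.mem_Ici.mpr hRm) (Set.mem_Ici.mpr hr0mem)
    show R (u-k) * Real.exp (R (u-k)) = r0 * Real.exp r0
    rw [hRe, hr0e]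
  have hkval : k = u - u * Real.log u / (u - 1) := by linarith [hainv]
  have part1 : -((u - k) + k) * Real.exp (-(u - k) + k * R (u - k) / (u - k)) =
      -Real.exp (-1) := by
    have hexp1 : -(u - k) + k * R (u - k) / (u - k) = -1 - Real.log u := by
      rw [hReq, hainv, hkval, hr0def]
      field_simp
      ring
    rw [hexp1]
    have h2 : Real.exp (-1 - Real.log u) = Real.exp (-1) / u := by
      rw [Real.exp_sub, Real.exp_log hu0]
    rw [h2, show (u - k) + k = u by ring]
    field_simp
  refine ⟨part1, ?_, ?_⟩
  · intro w hw hwe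
    rw [part1] at hwe
    apply xexp_mono.injOn (Set.mem_Ici.mpr hw) (Set.mem_Ici.mpr (le_refl (-1:ℝ)))
    show w * Real.exp w = (-1) * Real.exp (-1)
    rw [hwe]; ring
  · -- Strict antitonicity
    have halpu : alp u = u - k := by
      unfold alp; linarith [hainv]
    have hkpsi : (1:ℝ) - 1/u = k / psii u := by
      unfold psii
      rw [hkval]
      field_simp
    have Fmono : StrictMonoOn (fun t => Real.log (alp t + k) - alp t - k / t)
        (Set.Ioo 1 u) := by
      apply strictMonoOn_of_deriv_pos (convex_Ioo _ _)
      · intro t ht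
        have hpos : 0 < alp t + k := by linarith [alp_pos ht.1]
        exact (F_hasDeriv k ht.1 hpos).continuousAt.continuousWithinAt
      · intro t ht
        rw [interior_Ioo] at ht
        obtain ⟨ht1, htu⟩ := ht
        have ht0 : (0:ℝ) < t := by linarith
        have hpos : 0 < alp t + k := by linarith [alp_pos ht1]
        rw [(F_hasDeriv k ht1 hpos).deriv]
        set D : ℝ := (t - 1 - Real.log t) / (t - 1) ^ 2 with hDdef
        have hD : 0 < D := by
          rw [hDdef]
          have h1 : Real.log t < t - 1 := Real.log_lt_sub_one_of_pos ht0 (ne_of_gt ht1)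
          have h2 : (0:ℝ) < t - 1 := by linarith
          apply div_pos (by linarith) (by positivity)
        set s : ℝ := alp t + k with hsdef
        have hsu : s < u := by
          have := alp_mono (Set.mem_Ioi.mpr ht1) (Set.mem_Ioi.mpr hu) htu
          rw [halpu] at this
          rw [hsdef]; linarith
        have hs0 : (0:ℝ) < s := hpos
        have hψt : psii t = t ^ 2 * D := by
          rw [hDdef]; unfold psii; ring
        have hψtu : psii t < psii u := psii_mono (Set.mem_Ioi.mpr ht1) (Set.mem_Ioi.mpr hu) htu
        have hψt0 : 0 < psii t := psii_pos ht1
        have c1 : D * (1 - 1/s) < D * (1 - 1/u) := by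
          apply mul_lt_mul_of_pos_left _ hD
          have : 1/u < 1/s := by
            apply one_div_lt_one_div_of_lt hs0 hsu
          linarith
        have c3 : k / psii u < k / psii t := div_lt_div_of_pos_left hk hψt0 hψtu
        have c4 : D * (k / psii t) = k / t ^ 2 := by
          rw [hψt]
          field_simp
        have c5 : D * (k / psii u) < k / t ^ 2 := by
          rw [← c4]
          exact mul_lt_mul_of_pos_left c3 hD
        have c6 : D * (1 - 1/u) = D * (k / psii u) := by rw [hkpsi]
        have goal_eq : D / s - D + k / t ^ 2 = k / t ^ 2 - D * (1 - 1/s) := by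
          field_simp
          ring
        rw [goal_eq]
        linarith
    intro a1 h1 a2 h2 h12
    obtain ⟨h1l, h1r⟩ := h1
    obtain ⟨h2l, h2r⟩ := h2
    obtain ⟨hm1, hn1, he1⟩ := hR a1 (by linarith)
    obtain ⟨hm2, hn2, he2⟩ := hR a2 (by linarith)
    obtain ⟨t1, ht1, halp1, hA1⟩ := key_lemma k a1 (R a1) hk h1l hm1 hn1 he1
    obtain ⟨t2, ht2, halp2, hA2⟩ := key_lemma k a2 (R a2) hk h2l hm2 hn2 he2
    have ht1u : t1 < u := by
      have := (alp_mono.lt_iff_lt (Set.mem_Ioi.mpr ht1) (Set.mem_Ioi.mpr hu)).mp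
      apply this
      rw [halp1, halpu]; exact h1r
    have ht2u : t2 < u := by
      have := (alp_mono.lt_iff_lt (Set.mem_Ioi.mpr ht2) (Set.mem_Ioi.mpr hu)).mp
      apply this
      rw [halp2, halpu]; exact h2r
    have ht12 : t1 < t2 := by
      have := (alp_mono.lt_iff_lt (Set.mem_Ioi.mpr ht1) (Set.mem_Ioi.mpr ht2)).mp
      apply this
      rw [halp1, halp2]; exact h12
    have hF := Fmono (Set.mem_Ioo.mpr ⟨ht1, ht1u⟩) (Set.mem_Ioo.mpr ⟨ht2, ht2u⟩) ht12
    simp only at hF ⊢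
    rw [hA1, hA2]
    rw [← halp1, ← halp2]
    exact neg_lt_neg (Real.exp_lt_exp.mpr hF)
end
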